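/- Let λ > 0, I(x₁,x₂) = cos(2πλx₂)I₁(x₁) with I₁ ∈ L^∞(ℝ), ω ∈ L¹(ℝ²) radial (hence even in x₂), f α-Lipschitz with f(0)=0, and 0 < μ < μ₀ := 1/(α‖ω‖₁). Then the unique stationary solution a_I of a = I + μω∗f(a) satisfies a_I(x₁, x₂ + 1/λ) = a_I(x₁,x₂) and a_I(x₁,−x₂) = a_I(x₁,x₂) for a.e. (x₁,x₂) ∈ ℝ². -/

import Mathlib

/-!
The map `a ↦ I + μ · ω ∗ f(a)` is a contraction on bounded functions, with constant
`|μ| · Lip(f) · ‖ω‖₁ < 1`, so it has at most one bounded solution. A measure-preserving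
bijection `σ` of the plane with `ω (σ x - σ y) = ω (x - y)` and `I ∘ σ = I` turns solutions
into solutions by a change of variables, hence fixes the solution. Both the translation by
`(0, 1/λ)` and, for radial `ω`, the reflection `x₂ ↦ -x₂` are such maps.
-/

open MeasureTheory Real

lemma LipschitzWith.abs_le_of_abs_le {K : NNReal} {f : ℝ → ℝ} (hf : LipschitzWith K f)
    {C s : ℝ} (hs : |s| ≤ C) : |f s| ≤ |f 0| + K * C := by
  have h := hf.dist_le_mul s 0
  rw [Real.dist_eq, Real.dist_eq, sub_zero] at h
  have h₀ := abs_sub_abs_le_abs_sub (f s) (f 0)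
  have hK : (K : ℝ) * |s| ≤ K * C := by gcongr
  linarith

section StationarySolution

variable {G : Type*} [AddGroup G] [MeasurableSpace G] {ν : Measure G}
  {μ : ℝ} {ω : G → ℝ} {f : ℝ → ℝ} {I a b : G → ℝ}

def IsStationarySolution (ν : Measure G) (μ : ℝ) (ω : G → ℝ) (f : ℝ → ℝ) (I a : G → ℝ) : Prop :=
  ∀ x, a x = I x + μ * ∫ y, ω (x - y) * f (a y) ∂ν

lemma IsStationarySolution.comp_measurableEquiv (ha : IsStationarySolution ν μ ω f I a)
    (σ : G ≃ᵐ G) (hσ : MeasurePreserving σ ν ν) (hωσ : ∀ x y, ω (σ x - σ y) = ω (x - y))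
    (hIσ : ∀ x, I (σ x) = I x) : IsStationarySolution ν μ ω f I (a ∘ σ) := by
  intro x
  rw [Function.comp_apply, ha (σ x), hIσ, ← hσ.integral_comp']
  simp only [hωσ, Function.comp_apply]

variable [MeasurableAdd G] [MeasurableNeg G] [ν.IsAddLeftInvariant] [ν.IsNegInvariant]
  {K : NNReal}

lemma integrable_kernel_mul_comp (hω : Integrable ω ν) (hf : LipschitzWith K f)
    (ha : Measurable a) {C : ℝ} (hC : ∀ y, |a y| ≤ C) (x : G) :
    Integrable (fun y => ω (x - y) * f (a y)) ν := by
  simp_rw [mul_comm (ω _)]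
  exact (hω.comp_sub_left x).bdd_mul (hf.continuous.measurable.comp ha).aestronglyMeasurable
    (.of_forall fun y => hf.abs_le_of_abs_le (hC y))

lemma IsStationarySolution.abs_sub_le (ha : IsStationarySolution ν μ ω f I a)
    (hb : IsStationarySolution ν μ ω f I b) (hω : Integrable ω ν) (hf : LipschitzWith K f)
    (hma : Measurable a) (hmb : Measurable b) {Ca Cb : ℝ} (hCa : ∀ y, |a y| ≤ Ca)
    (hCb : ∀ y, |b y| ≤ Cb) {B : ℝ} (hB : ∀ y, |a y - b y| ≤ B) (x : G) :
    |a x - b x| ≤ |μ| * K * (∫ y, |ω y| ∂ν) * B := by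
  have hIa := integrable_kernel_mul_comp hω hf hma hCa x
  have hIb := integrable_kernel_mul_comp hω hf hmb hCb x
  have hpt : ∀ y, ‖ω (x - y) * f (a y) - ω (x - y) * f (b y)‖ ≤ |ω (x - y)| * (K * B) := by
    intro y
    rw [Real.norm_eq_abs, ← mul_sub, abs_mul]
    gcongr
    exact (hf.dist_le_mul _ _).trans (by gcongr; exact hB y)
  calc |a x - b x|
      = |μ * ∫ y, (ω (x - y) * f (a y) - ω (x - y) * f (b y)) ∂ν| := by
        rw [integral_sub hIa hIb, mul_sub]
        congr 1
        linarith [ha x, hb x]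
    _ ≤ |μ| * ∫ y, |ω (x - y)| * (K * B) ∂ν := by
        rw [abs_mul]
        gcongr
        exact norm_integral_le_of_norm_le ((hω.comp_sub_left x).abs.mul_const _) (.of_forall hpt)
    _ = |μ| * K * (∫ y, |ω y| ∂ν) * B := by
        rw [integral_mul_const, integral_sub_left_eq_self (fun y => |ω y|)]
        ring

lemma IsStationarySolution.unique (ha : IsStationarySolution ν μ ω f I a)
    (hb : IsStationarySolution ν μ ω f I b) (hω : Integrable ω ν) (hf : LipschitzWith K f)
    (hcontr : |μ| * K * (∫ y, |ω y| ∂ν) < 1)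
    (hma : Measurable a) (hmb : Measurable b) {Ca Cb : ℝ} (hCa : ∀ y, |a y| ≤ Ca)
    (hCb : ∀ y, |b y| ≤ Cb) : a = b := by
  funext x
  have : Nonempty G := ⟨x⟩
  set D := ⨆ y, |a y - b y|
  have hbdd : BddAbove (Set.range fun y => |a y - b y|) :=
    ⟨Ca + Cb, Set.forall_mem_range.2 fun y => (abs_sub _ _).trans (add_le_add (hCa y) (hCb y))⟩
  have hxD : |a x - b x| ≤ D := le_ciSup hbdd x
  have hDD : D ≤ |μ| * K * (∫ y, |ω y| ∂ν) * D :=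
    ciSup_le (ha.abs_sub_le hb hω hf hma hmb hCa hCb (le_ciSup hbdd))
  have hk : 0 ≤ |μ| * K * (∫ y, |ω y| ∂ν) := by positivity
  have hx0 := abs_nonneg (a x - b x)
  have : |a x - b x| = 0 := by nlinarith
  exact sub_eq_zero.1 (abs_eq_zero.1 this)

lemma IsStationarySolution.comp_eq_self (ha : IsStationarySolution ν μ ω f I a)
    (hω : Integrable ω ν) (hf : LipschitzWith K f) (hcontr : |μ| * K * (∫ y, |ω y| ∂ν) < 1)
    (hma : Measurable a) {C : ℝ} (hC : ∀ y, |a y| ≤ C)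
    (σ : G ≃ᵐ G) (hσ : MeasurePreserving σ ν ν) (hωσ : ∀ x y, ω (σ x - σ y) = ω (x - y))
    (hIσ : ∀ x, I (σ x) = I x) : a ∘ σ = a :=
  (ha.comp_measurableEquiv σ hσ hωσ hIσ).unique ha hω hf hcontr (hma.comp σ.measurable) hma
    (fun y => hC (σ y)) hC

end StationarySolution

theorem stmt13_general (lam α μ : ℝ) (hlam : 0 < lam) (hα : 0 < α) (hμ : 0 < μ)
    (f : ℝ → ℝ) (hf : ∀ s t, |f s - f t| ≤ α * |s - t|)
    (ω : ℝ × ℝ → ℝ) (hω : Integrable ω)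
    (hrad : ∀ p q : ℝ × ℝ, p.1 ^ 2 + p.2 ^ 2 = q.1 ^ 2 + q.2 ^ 2 → ω p = ω q)
    (hcontr : μ * α * (∫ x, |ω x|) < 1)
    (I₁ : ℝ → ℝ)
    (a : ℝ × ℝ → ℝ) (hameas : Measurable a) (habd : ∃ C, ∀ x, |a x| ≤ C)
    (ha : ∀ x : ℝ × ℝ, a x = Real.cos (2 * π * lam * x.2) * I₁ x.1
      + μ * ∫ y, ω (x - y) * f (a y)) :
    (∀ᵐ p : ℝ × ℝ, a (p.1, p.2 + 1 / lam) = a p) ∧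
    (∀ᵐ p : ℝ × ℝ, a (p.1, -p.2) = a p) := by
  obtain ⟨C, hC⟩ := habd
  have hfK : LipschitzWith α.toNNReal f := .of_dist_le_mul fun s t => by
    simpa [Real.dist_eq, hα.le] using hf s t
  have hk : |μ| * α.toNNReal * ∫ y, |ω y| < 1 := by
    rwa [abs_of_pos hμ, Real.coe_toNNReal _ hα.le]
  have invariant := (show IsStationarySolution volume μ ω f _ a from ha).comp_eq_self
    hω hfK hk hameas hC
  constructor
  · have hshift := invariant (.addRight (0, 1 / lam)) (measurePreserving_add_right _ _)
      (fun x y => by simp) fun x => by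
        have hperiod : 2 * π * lam * (x.2 + 1 / lam) = 2 * π * lam * x.2 + 2 * π := by field_simp
        change cos (2 * π * lam * (x.2 + 1 / lam)) * I₁ (x.1 + 0) = _
        rw [hperiod, cos_add_two_pi, add_zero]
    refine .of_forall fun p => ?_
    rw [← congrFun hshift p]
    exact congrArg a (Prod.ext (add_zero p.1).symm rfl)
  · have hreflect := invariant ((MeasurableEquiv.refl ℝ).prodCongr (MeasurableEquiv.neg ℝ))
      ((MeasurePreserving.id volume).prod (Measure.measurePreserving_neg volume))
      (fun x y => hrad _ _ (by
        change (x.1 - y.1) ^ 2 + (-x.2 - -y.2) ^ 2 = (x.1 - y.1) ^ 2 + (x.2 - y.2) ^ 2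
        ring))
      fun x => by
        change cos (2 * π * lam * -x.2) * I₁ x.1 = _
        rw [mul_neg, cos_neg]
    exact .of_forall fun p => congrFun hreflect p

/-- The stationary solution associated with an input `I(x₁,x₂) = cos(2πλx₂)I₁(x₁)`
is (a.e.) `1/λ`-periodic and even with respect to `x₂`. -/
theorem stmt13 (lam α μ : ℝ) (hlam : 0 < lam) (hα : 0 < α) (hμ : 0 < μ)
    (f : ℝ → ℝ) (hf : ∀ s t, |f s - f t| ≤ α * |s - t|) (hf0 : f 0 = 0)
    (ω : ℝ × ℝ → ℝ) (hω : Integrable ω)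
    (hrad : ∀ p q : ℝ × ℝ, p.1 ^ 2 + p.2 ^ 2 = q.1 ^ 2 + q.2 ^ 2 → ω p = ω q)
    (hcontr : μ * α * (∫ x, |ω x|) < 1)
    (I₁ : ℝ → ℝ) (hI₁ : ∃ C, ∀ s, |I₁ s| ≤ C)
    (a : ℝ × ℝ → ℝ) (hameas : Measurable a) (habd : ∃ C, ∀ x, |a x| ≤ C)
    (ha : ∀ x : ℝ × ℝ, a x = Real.cos (2 * π * lam * x.2) * I₁ x.1
      + μ * ∫ y, ω (x - y) * f (a y)) :
    (∀ᵐ p : ℝ × ℝ, a (p.1, p.2 + 1 / lam) = a p) ∧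
    (∀ᵐ p : ℝ × ℝ, a (p.1, -p.2) = a p) :=
  stmt13_general lam α μ hlam hα hμ f hf ω hω hrad hcontr I₁ a hameas habd ha
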